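/- For every subset D ⊆ {1,…,n−1}, the families {v_D · σ_σ : σ ∈ 𝔖_n, Des(σ⁻¹) ⊆ D} and {v_σ : σ ∈ 𝔖_n, Des(σ⁻¹) ⊆ D} are both vector space bases of P_D. In particular, dim P_D = n!/(i_1! i_2! ⋯ i_k!), where (i_1,…,i_k) is the unique composition of n whose descent set {i_1, i_1+i_2, …, i_1+⋯+i_{k−1}} equals D. -/

import Mathlib

open scoped Classical

set_option maxHeartbeats 1000000
set_option synthInstance.maxHeartbeats 400000

noncomputable section

/-- The symmetric group on `{1, …, n}`, 0-indexed as permutations of `Fin n`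
(so positions/descents are indexed by `i ∈ {0, …, n-2}` instead of `{1, …, n-1}`). -/
abbrev PermN (n : ℕ) := Equiv.Perm (Fin n)

/-- The vector space `ℂ𝔖ₙ` with basis the symmetric group. -/
abbrev CS (n : ℕ) := Equiv.Perm (Fin n) →₀ ℂ

/-- The elementary transposition `sᵢ` exchanging `i` and `i+1` (0-indexed). -/
def swapAt (n i : ℕ) (h : i + 1 < n) : PermN n :=
  Equiv.swap ⟨i, Nat.lt_of_succ_lt h⟩ ⟨i + 1, h⟩

/-- The operator `σᵢ` on `ℂ𝔖ₙ`: right multiplication by `sᵢ` (action on positions),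
`μ ↦ μ sᵢ`. -/
def sigmaOp (n i : ℕ) : Module.End ℂ (CS n) :=
  if h : i + 1 < n then Finsupp.lmapDomain ℂ ℂ (fun μ => μ * swapAt n i h) else 1

/-- The elementary decreasing sorting operator `πᵢ` on `ℂ𝔖ₙ`:
`μ ↦ μ` if `μᵢ > μᵢ₊₁` and `μ ↦ μ sᵢ` otherwise. -/
def piOp (n i : ℕ) : Module.End ℂ (CS n) :=
  if h : i + 1 < n then
    Finsupp.lmapDomain ℂ ℂ (fun μ : PermN n =>
      if μ ⟨i + 1, h⟩ < μ ⟨i, Nat.lt_of_succ_lt h⟩ then μ else μ * swapAt n i h)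
  else 1

/-- The operator `σ̄ᵢ` on `ℂ𝔖ₙ`: left multiplication by `sᵢ` (action on values),
`μ ↦ sᵢ μ`. -/
def sigmaBarOp (n i : ℕ) : Module.End ℂ (CS n) :=
  if h : i + 1 < n then Finsupp.lmapDomain ℂ ℂ (fun μ => swapAt n i h * μ) else 1

/-- The operator `σ_σ` of right multiplication by a permutation `σ`
(equal to the product of the `σᵢ` along any reduced word for `σ`). -/
def rightMulOp (n : ℕ) (σ : PermN n) : Module.End ℂ (CS n) :=
  Finsupp.lmapDomain ℂ ℂ (fun μ => μ * σ)

/-- The algebra `H𝔖ₙ`: the subalgebra of `End(ℂ𝔖ₙ)` generated by the operators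
`σ₁, …, σ_{n-1}, π₁, …, π_{n-1}`.

Note on conventions: the paper composes operators left to right, `v·(fg) = (v·f)·g`,
while multiplication in `Module.End` is `(f * g) v = f (g v)`.  Hence the paper's
product `f·g` is `g * f` here.  This does not affect the generated subalgebra. -/
def HS (n : ℕ) : Subalgebra ℂ (Module.End ℂ (CS n)) :=
  Algebra.adjoin ℂ
    ({f | ∃ i, ∃ _ : i + 1 < n, f = sigmaOp n i} ∪ {f | ∃ i, ∃ _ : i + 1 < n, f = piOp n i})

/-- The descent set `Des(μ) = {i : μᵢ > μᵢ₊₁}` (0-indexed positions). -/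
def Des (n : ℕ) (μ : PermN n) : Set ℕ :=
  {i | ∃ h : i + 1 < n, μ ⟨i + 1, h⟩ < μ ⟨i, Nat.lt_of_succ_lt h⟩}

/-- The module `P_D`: the vectors of `ℂ𝔖ₙ` that are left `i`-antisymmetric
for every `i ∉ D` (0-indexed, `i+1 < n`). -/
def PD (n : ℕ) (D : Set ℕ) : Submodule ℂ (CS n) :=
  ⨅ i : {i : ℕ // i + 1 < n ∧ i ∉ D}, LinearMap.ker (1 + sigmaBarOp n i.1)

/-- The Young subgroup `𝔖_⟨D⟩` generated by the `sᵢ` for `i ∉ D`. -/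
def Young (n : ℕ) (D : Set ℕ) : Subgroup (PermN n) :=
  Subgroup.closure {g | ∃ i, ∃ h : i + 1 < n, i ∉ D ∧ g = swapAt n i h}

/-- The vector `v_D = ∑_{ν ∈ 𝔖_⟨D⟩} (-1)^{ℓ(ν)} ν` (the sign `(-1)^{ℓ(ν)}` is the
signature of `ν`). -/
def vD (n : ℕ) (D : Set ℕ) : CS n :=
  ∑ᶠ ν ∈ (Young n D : Set (PermN n)),
    ((Equiv.Perm.sign ν : ℤ) : ℂ) • Finsupp.single ν 1

/-- The vector `v_σ := v_{Des(σ⁻¹)} · σ_σ`. -/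
def vPerm (n : ℕ) (σ : PermN n) : CS n :=
  rightMulOp n σ (vD n (Des n σ⁻¹))


/-!
Every permutation factors uniquely as `ν * σ` with `ν` in the Young subgroup `𝔖_⟨D⟩`, which is
the group of permutations preserving the block `blockIndex D x` of every position `x`, and `σ⁻¹`
increasing on each block, i.e. `Des(σ⁻¹) ⊆ D`. Such a `σ` is found by repeatedly removing an
inversion, and it has strictly fewer inversions than every other element of its coset: each
inversion of `σ` involves values in two different blocks, so it survives left multiplication by
`ν`, while `ν ≠ 1` creates a new one inside a block. An element `f` of `P_D` satisfies
`f (ν * g) = sign ν * f g`, so it is determined by its values at the representatives `σ`, and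
`v_D · σ_σ` takes the value `1` at `σ` and `0` at every other representative: this is the first
basis. The vector `v_σ` also takes the value `1` at `σ`, and is supported on `𝔖_⟨Des(σ⁻¹)⟩ σ`,
hence on `σ` and permutations with more inversions, so the second family is unitriangular with
respect to the first one. Finally `n! = |𝔖_⟨D⟩| · dim P_D`, and `𝔖_⟨D⟩` is a product of
symmetric groups on the blocks.
-/

open Finset

variable {n : ℕ}

section Inversions

def inversions (π : PermN n) : Finset (Fin n × Fin n) :=
  {p | p.1 < p.2 ∧ π p.2 < π p.1}

def invCount (π : PermN n) : ℕ := #(inversions π)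

lemma mem_inversions {π : PermN n} {p : Fin n × Fin n} :
    p ∈ inversions π ↔ p.1 < p.2 ∧ π p.2 < π p.1 := by
  simp [inversions]

lemma invCount_one : invCount (1 : PermN n) = 0 := by
  simp only [invCount, card_eq_zero, eq_empty_iff_forall_notMem, mem_inversions]
  exact fun p h => lt_asymm h.1 h.2

lemma exists_mem_inversions_of_ne_one {π : PermN n} (h : π ≠ 1) : ∃ p, p ∈ inversions π := by
  by_contra! hno
  have hmono : Monotone π := fun x y hxy => by
    rcases hxy.lt_or_eq with hlt | rfl
    · exact not_lt.1 fun hinv => hno (x, y) (mem_inversions.2 ⟨hlt, hinv⟩)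
    · rfl
  exact h (Equiv.ext (congrFun (Tuple.unique_monotone (f := id) (τ := 1) hmono monotone_id)))

lemma swapAt_val {i : ℕ} (h : i + 1 < n) (x : Fin n) :
    (swapAt n i h x : ℕ) = if (x : ℕ) = i then i + 1 else if (x : ℕ) = i + 1 then i else x := by
  rw [swapAt, Equiv.swap_apply_def]
  split_ifs <;> simp_all [Fin.ext_iff]

lemma swapAt_lt_swapAt {i : ℕ} (h : i + 1 < n) {x y : Fin n} (hxy : x < y)
    (hne : (x : ℕ) ≠ i ∨ (y : ℕ) ≠ i + 1) : swapAt n i h x < swapAt n i h y := by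
  rw [Fin.lt_def] at hxy ⊢
  rw [swapAt_val, swapAt_val]
  split_ifs <;> omega

lemma invCount_mul_swapAt_lt {π : PermN n} {i : ℕ} (h : i + 1 < n)
    (hd : π ⟨i + 1, h⟩ < π ⟨i, Nat.lt_of_succ_lt h⟩) :
    invCount (π * swapAt n i h) < invCount π := by
  set s := swapAt n i h
  have hφ : Function.Injective (Prod.map s s) := s.injective.prodMap s.injective
  have hsub : (inversions (π * s)).image (Prod.map s s) ⊂ inversions π := by
    refine (ssubset_iff_of_subset ?_).2 ⟨(⟨i, Nat.lt_of_succ_lt h⟩, ⟨i + 1, h⟩),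
      mem_inversions.2 ⟨Fin.mk_lt_mk.2 (Nat.lt_succ_self i), hd⟩, ?_⟩
    · simp only [subset_iff, mem_image, mem_inversions, Prod.exists, Prod.map, forall_exists_index,
        and_imp, Prod.forall, Prod.mk.injEq]
      rintro _ _ x y hxy hinv rfl rfl
      refine ⟨swapAt_lt_swapAt h hxy (not_and_or.1 fun hxi => ?_), hinv⟩
      obtain rfl : x = ⟨i, Nat.lt_of_succ_lt h⟩ := Fin.ext hxi.1
      obtain rfl : y = ⟨i + 1, h⟩ := Fin.ext hxi.2
      simp only [Equiv.Perm.coe_mul, Function.comp_apply, s, swapAt, Equiv.swap_apply_left,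
        Equiv.swap_apply_right] at hinv
      exact lt_asymm hd hinv
    · simp only [mem_image, mem_inversions, Prod.exists, Prod.map, Prod.mk.injEq, not_exists,
        not_and]
      intro x y hxy hx hy
      simp only [Fin.ext_iff] at hx hy
      rw [swapAt_val] at hx hy
      have := Fin.lt_def.1 hxy.1
      split_ifs at hx hy <;> omega
  calc invCount (π * s) = #((inversions (π * s)).image (Prod.map s s)) :=
        (card_image_of_injective _ hφ).symm
    _ < invCount π := card_lt_card hsub

end Inversions

lemma Fin.apply_le_apply_of_adjacent {α : Type*} [Preorder α] {f : Fin n → α} {u v : Fin n}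
    (huv : u ≤ v) (hf : ∀ i (hi : i + 1 < n), (u : ℕ) ≤ i → i + 1 ≤ v →
      f ⟨i, Nat.lt_of_succ_lt hi⟩ ≤ f ⟨i + 1, hi⟩) :
    f u ≤ f v := by
  obtain ⟨v, hv⟩ := v
  induction v with
  | zero => exact le_of_eq (congrArg f (Fin.ext (Nat.le_zero.1 huv)))
  | succ k ih =>
    rcases eq_or_lt_of_le huv with rfl | hlt
    · exact le_rfl
    · have hk : (u : ℕ) ≤ k := Nat.le_of_lt_succ hlt
      exact (ih (Nat.lt_of_succ_lt hv) hk fun i hi h1 h2 => hf i hi h1 (Nat.le_succ_of_le h2)).trans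
        (hf k hv hk le_rfl)

section Blocks

variable {D : Set ℕ}

def blockIndex (D : Set ℕ) (x : Fin n) : ℕ := #{j ∈ range x | j ∈ D}

lemma blockIndex_mono (D : Set ℕ) : Monotone (blockIndex (n := n) D) := fun _ _ hxy =>
  card_le_card (filter_subset_filter _ (range_subset_range.2 hxy))

lemma blockIndex_succ (D : Set ℕ) {i : ℕ} (h : i + 1 < n) :
    blockIndex D ⟨i + 1, h⟩ = blockIndex D ⟨i, Nat.lt_of_succ_lt h⟩ + if i ∈ D then 1 else 0 := by
  simp only [blockIndex, range_add_one, filter_insert]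
  split_ifs with hi
  · exact card_insert_of_notMem (by simp)
  · rfl

lemma blockIndex_swapAt {i : ℕ} (h : i + 1 < n) (hi : i ∉ D) :
    blockIndex D ∘ swapAt n i h = blockIndex D := by
  have hsucc := blockIndex_succ D h
  rw [if_neg hi, add_zero] at hsucc
  funext x
  simp only [Function.comp_apply, swapAt, Equiv.swap_apply_def]
  split_ifs with h1 h2
  · rw [h1, hsucc]
  · rw [h2, hsucc]
  · rfl

lemma swapAt_mem_Young {i : ℕ} (h : i + 1 < n) (hi : i ∉ D) : swapAt n i h ∈ Young n D :=
  Subgroup.subset_closure ⟨i, h, hi, rfl⟩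

lemma blockIndex_comp_of_mem_Young {ν : PermN n} (hν : ν ∈ Young n D) :
    blockIndex D ∘ ν = blockIndex D := by
  induction hν using Subgroup.closure_induction with
  | mem g hg =>
    obtain ⟨i, h, hi, rfl⟩ := hg
    exact blockIndex_swapAt h hi
  | one => rfl
  | mul a b _ _ ha hb => rw [Equiv.Perm.coe_mul, ← Function.comp_assoc, ha, hb]
  | inv a _ ha => exact (Equiv.comp_symm_eq a _ _).2 ha.symm

end Blocks

section CosetRepresentatives

variable {D : Set ℕ}

lemma inv_lt_inv_of_blockIndex_eq {σ : PermN n} (hσ : Des n σ⁻¹ ⊆ D) {u v : Fin n}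
    (huv : u < v) (hb : blockIndex D u = blockIndex D v) : σ⁻¹ u < σ⁻¹ v := by
  refine lt_of_le_of_ne (Fin.apply_le_apply_of_adjacent huv.le fun i hi h1 h2 => ?_)
    (σ⁻¹.injective.ne huv.ne)
  have hu := blockIndex_mono D (show u ≤ ⟨i, Nat.lt_of_succ_lt hi⟩ from h1)
  have hv := blockIndex_mono D (show ⟨i + 1, hi⟩ ≤ v from h2)
  have hiD : i ∉ D := fun hiD => by
    have := blockIndex_succ D hi
    rw [if_pos hiD] at this
    omega
  exact not_lt.1 fun hd => hiD (hσ ⟨hi, hd⟩)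

lemma inversions_subset_inversions_mul {σ ν : PermN n} (hσ : Des n σ⁻¹ ⊆ D)
    (hν : blockIndex D ∘ ν = blockIndex D) : inversions σ ⊆ inversions (ν * σ) := by
  intro ⟨x, y⟩ hxy
  rw [mem_inversions] at hxy ⊢
  refine ⟨hxy.1, ?_⟩
  have hlt : blockIndex D (σ y) < blockIndex D (σ x) := by
    refine lt_of_le_of_ne (blockIndex_mono D hxy.2.le) fun heq => ?_
    exact lt_asymm hxy.1 (by simpa using inv_lt_inv_of_blockIndex_eq hσ hxy.2 heq)
  rw [← hν] at hlt
  exact (blockIndex_mono D).reflect_lt hlt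

lemma invCount_lt_invCount_mul {σ ν : PermN n} (hσ : Des n σ⁻¹ ⊆ D)
    (hν : blockIndex D ∘ ν = blockIndex D) (hne : ν ≠ 1) :
    invCount σ < invCount (ν * σ) := by
  obtain ⟨⟨u, v⟩, huv⟩ := exists_mem_inversions_of_ne_one hne
  rw [mem_inversions] at huv
  have hb : blockIndex D u = blockIndex D v := by
    have hνu : blockIndex D (ν u) = blockIndex D u := congrFun hν u
    have hνv : blockIndex D (ν v) = blockIndex D v := congrFun hν v
    have := blockIndex_mono D huv.2.le
    exact le_antisymm (blockIndex_mono D huv.1.le) (by rwa [hνu, hνv] at this)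
  refine card_lt_card ((ssubset_iff_of_subset (inversions_subset_inversions_mul hσ hν)).2
    ⟨(σ⁻¹ u, σ⁻¹ v), ?_, ?_⟩)
  · rw [mem_inversions]
    exact ⟨inv_lt_inv_of_blockIndex_eq hσ huv.1 hb, by simpa using huv.2⟩
  · rw [mem_inversions]
    simp [huv.1.le]

lemma exists_mul_mem_Young_Des_subset {μ τ : PermN n} (hτ : μ * τ ∈ Young n D) :
    ∃ τ', μ * τ' ∈ Young n D ∧ Des n τ' ⊆ D := by
  by_cases hdes : Des n τ ⊆ D
  · exact ⟨τ, hτ, hdes⟩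
  obtain ⟨i, ⟨h, hd⟩, hiD⟩ := Set.not_subset.1 hdes
  have := invCount_mul_swapAt_lt h hd
  exact exists_mul_mem_Young_Des_subset
    (by rw [← mul_assoc]; exact mul_mem hτ (swapAt_mem_Young h hiD))
termination_by invCount τ

lemma exists_mem_Young_mul (D : Set ℕ) (μ : PermN n) :
    ∃ ν ∈ Young n D, ∃ σ, Des n σ⁻¹ ⊆ D ∧ ν * σ = μ := by
  obtain ⟨τ, hτ, hdes⟩ := exists_mul_mem_Young_Des_subset (τ := μ⁻¹) (D := D)
    (by rw [mul_inv_cancel]; exact one_mem _)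
  exact ⟨μ * τ, hτ, τ⁻¹, by simpa using hdes, by group⟩

lemma eq_one_of_mem_Young_of_mul_eq {σ σ' ρ : PermN n} (hσ : Des n σ⁻¹ ⊆ D)
    (hσ' : Des n σ'⁻¹ ⊆ D) (hρ : ρ ∈ Young n D) (h : ρ * σ = σ') : ρ = 1 := by
  by_contra hne
  have h1 := invCount_lt_invCount_mul hσ (blockIndex_comp_of_mem_Young hρ) hne
  have h2 := invCount_lt_invCount_mul hσ' (blockIndex_comp_of_mem_Young (inv_mem hρ))
    (inv_ne_one.2 hne)
  rw [h] at h1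
  rw [show ρ⁻¹ * σ' = σ by rw [← h, inv_mul_cancel_left]] at h2
  omega

lemma mem_Young_iff {ν : PermN n} : ν ∈ Young n D ↔ blockIndex D ∘ ν = blockIndex D := by
  refine ⟨blockIndex_comp_of_mem_Young, fun hν => ?_⟩
  obtain ⟨ν', hν', σ, hσ, rfl⟩ := exists_mem_Young_mul D ν
  have hσ1 : σ = 1 := by
    by_contra hne
    have hσD : blockIndex D ∘ σ = blockIndex D := by
      rwa [Equiv.Perm.coe_mul, ← Function.comp_assoc, blockIndex_comp_of_mem_Young hν'] at hν
    have := invCount_lt_invCount_mul (ν := σ⁻¹) hσ ((Equiv.comp_symm_eq σ _ _).2 hσD.symm)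
      (inv_ne_one.2 hne)
    rw [inv_mul_cancel, invCount_one] at this
    omega
  rwa [hσ1, mul_one]

def youngMulEquiv (D : Set ℕ) : Young n D × {σ : PermN n // Des n σ⁻¹ ⊆ D} ≃ PermN n :=
  Equiv.ofBijective (fun p => p.1 * p.2)
    ⟨fun ⟨⟨ν, hν⟩, ⟨σ, hσ⟩⟩ ⟨⟨ν', hν'⟩, ⟨σ', hσ'⟩⟩ h => by
      have h' : ν * σ = ν' * σ' := h
      obtain rfl : ν' = ν := inv_mul_eq_one.1 (eq_one_of_mem_Young_of_mul_eq hσ hσ'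
        (mul_mem (inv_mem hν') hν) (by rw [mul_assoc, h', inv_mul_cancel_left]))
      obtain rfl : σ = σ' := mul_left_cancel h'
      rfl,
    fun μ => by
      obtain ⟨ν, hν, σ, hσ, rfl⟩ := exists_mem_Young_mul D μ
      exact ⟨(⟨ν, hν⟩, ⟨σ, hσ⟩), rfl⟩⟩

end CosetRepresentatives

section Antisymmetrizers

variable {D : Set ℕ}

lemma rightMulOp_apply (σ : PermN n) (f : CS n) (μ : PermN n) :
    rightMulOp n σ f μ = f (μ * σ⁻¹) := by
  conv_lhs => rw [← inv_mul_cancel_right μ σ]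
  exact Finsupp.mapDomain_apply (mul_left_injective σ) f _

lemma sigmaBarOp_apply {i : ℕ} (h : i + 1 < n) (f : CS n) (μ : PermN n) :
    sigmaBarOp n i f μ = f (swapAt n i h * μ) := by
  conv_lhs => rw [← mul_inv_cancel_left (swapAt n i h) μ]
  rw [sigmaBarOp, dif_pos h, swapAt, Equiv.swap_inv]
  exact Finsupp.mapDomain_apply (mul_right_injective _) f _

lemma vD_apply (D : Set ℕ) (μ : PermN n) :
    vD n D μ = if μ ∈ Young n D then ((Equiv.Perm.sign μ : ℤ) : ℂ) else 0 := by
  rw [vD, finsum_mem_eq_finite_toFinset_sum _ (Set.toFinite _), Finsupp.finsetSum_apply]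
  simp_rw [Finsupp.smul_apply, Finsupp.single_apply, smul_eq_mul, mul_ite, mul_one, mul_zero]
  rw [sum_ite_eq']
  simp

lemma mem_PD_iff {f : CS n} :
    f ∈ PD n D ↔ ∀ i (h : i + 1 < n), i ∉ D → ∀ μ, f (swapAt n i h * μ) = -f μ := by
  simp only [PD, Submodule.mem_iInf, LinearMap.mem_ker, Finsupp.ext_iff, LinearMap.add_apply,
    Module.End.one_apply, Finsupp.add_apply, Finsupp.coe_zero, Pi.zero_apply, Subtype.forall,
    and_imp]
  refine forall_congr' fun i => ⟨fun hf h hi μ => ?_, fun hf h hi μ => ?_⟩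
  · have := hf h hi μ
    rw [sigmaBarOp_apply h] at this
    linear_combination this
  · rw [sigmaBarOp_apply h, hf h hi, add_neg_cancel]

lemma PD_mono {E : Set ℕ} (h : E ⊆ D) : PD n E ≤ PD n D := fun _ hf =>
  mem_PD_iff.2 fun i hi hiD => mem_PD_iff.1 hf i hi (fun hiE => hiD (h hiE))

lemma vD_mem_PD (D : Set ℕ) : vD n D ∈ PD n D := by
  refine mem_PD_iff.2 fun i h hi μ => ?_
  have hs := swapAt_mem_Young h hi
  rw [vD_apply, vD_apply, Subgroup.mul_mem_cancel_left _ hs]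
  simp only [Equiv.Perm.sign_mul, swapAt,
    Equiv.Perm.sign_swap (Fin.ne_of_lt (Fin.mk_lt_mk.2 (Nat.lt_succ_self i)))]
  split_ifs <;> simp

lemma rightMulOp_mem_PD {f : CS n} (hf : f ∈ PD n D) (σ : PermN n) : rightMulOp n σ f ∈ PD n D :=
  mem_PD_iff.2 fun i h hi μ => by
    simp only [rightMulOp_apply, mul_assoc, mem_PD_iff.1 hf i h hi]

lemma apply_mul_of_mem_PD {f : CS n} (hf : f ∈ PD n D) {ν : PermN n} (hν : ν ∈ Young n D)
    (g : PermN n) : f (ν * g) = (Equiv.Perm.sign ν : ℤ) * f g := by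
  have key : ∀ x ∈ {g | ∃ i, ∃ h : i + 1 < n, i ∉ D ∧ g = swapAt n i h}, ∀ y : PermN n,
      (∀ g, f (y * g) = (Equiv.Perm.sign y : ℤ) * f g) →
      ∀ g, f (x * y * g) = (Equiv.Perm.sign (x * y) : ℤ) * f g := by
    rintro _ ⟨i, h, hi, rfl⟩ y hy g
    rw [mul_assoc, mem_PD_iff.1 hf i h hi, hy, Equiv.Perm.sign_mul, swapAt,
      Equiv.Perm.sign_swap (Fin.ne_of_lt (Fin.mk_lt_mk.2 (Nat.lt_succ_self i)))]
    push_cast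
    ring
  revert g
  induction hν using Subgroup.closure_induction_left with
  | one => simp
  | mul_left x hx y _ hy => exact key x hx y hy
  | inv_mul_cancel x hx y _ hy =>
    obtain ⟨i, h, hi, rfl⟩ := hx
    rw [swapAt, Equiv.swap_inv]
    exact key _ ⟨i, h, hi, rfl⟩ y hy

end Antisymmetrizers

theorem Finsupp.linearIndependent_of_unitriangular {R α ι : Type*} [Ring R] (v : ι → α →₀ R)
    (e : ι → α) (w : ι → ℕ) (hdiag : ∀ i, v i (e i) = 1)
    (htri : ∀ i j, i ≠ j → v i (e j) ≠ 0 → w i < w j) : LinearIndependent R v := by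
  rw [linearIndependent_iff']
  intro s g hg i hi
  by_contra hgi
  obtain ⟨j, hj, hmin⟩ := (s.filter (g · ≠ 0)).exists_min_image w ⟨i, mem_filter.2 ⟨hi, hgi⟩⟩
  rw [mem_filter] at hj
  have hgj := DFunLike.congr_fun hg (e j)
  rw [Finsupp.finsetSum_apply, Finset.sum_eq_single j, Finsupp.smul_apply, hdiag, smul_eq_mul,
    mul_one] at hgj
  · exact hj.2 hgj
  · intro k hk hkj
    by_cases hgk : g k = 0
    · simp [hgk]
    by_contra hv
    have := hmin k (mem_filter.2 ⟨hk, hgk⟩)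
    have := htri k j hkj (right_ne_zero_of_smul hv)
    omega
  · exact fun hj' => absurd hj.1 hj'

section Bases

variable (D : Set ℕ)

lemma rightMulOp_vD_apply_of_Des_subset {σ τ : PermN n} (hσ : Des n σ⁻¹ ⊆ D)
    (hτ : Des n τ⁻¹ ⊆ D) : rightMulOp n σ (vD n D) τ = if σ = τ then 1 else 0 := by
  rw [rightMulOp_apply, vD_apply]
  split_ifs with hmem heq heq
  · simp [heq]
  · exact absurd (mul_inv_eq_one.1
      (eq_one_of_mem_Young_of_mul_eq hσ hτ hmem (inv_mul_cancel_right τ σ))).symm heq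
  · exact absurd (by rw [heq, mul_inv_cancel]; exact one_mem _) hmem
  · rfl

lemma sum_smul_rightMulOp_vD_apply (c : {σ : PermN n // Des n σ⁻¹ ⊆ D} → ℂ)
    (τ : {σ : PermN n // Des n σ⁻¹ ⊆ D}) :
    (∑ σ, c σ • rightMulOp n σ.1 (vD n D)) τ.1 = c τ := by
  rw [Finsupp.finsetSum_apply, Finset.sum_eq_single τ (fun σ _ hne => ?_) (by simp),
    Finsupp.smul_apply, rightMulOp_vD_apply_of_Des_subset D τ.2 τ.2, if_pos rfl, smul_eq_mul,
    mul_one]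
  rw [Finsupp.smul_apply, rightMulOp_vD_apply_of_Des_subset D σ.2 τ.2,
    if_neg (Subtype.coe_ne_coe.2 hne), smul_zero]

lemma eq_zero_of_mem_PD_of_apply_eq_zero {f : CS n} (hf : f ∈ PD n D)
    (h : ∀ σ, Des n σ⁻¹ ⊆ D → f σ = 0) : f = 0 := by
  ext μ
  obtain ⟨ν, hν, σ, hσ, rfl⟩ := exists_mem_Young_mul D μ
  rw [apply_mul_of_mem_PD hf hν, h σ hσ, mul_zero, Finsupp.coe_zero, Pi.zero_apply]

lemma linearIndependent_rightMulOp_vD :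
    LinearIndependent ℂ
      (fun σ : {σ : PermN n // Des n σ⁻¹ ⊆ D} => rightMulOp n σ.1 (vD n D)) :=
  Fintype.linearIndependent_iff.2 fun c hc τ => by
    rw [← sum_smul_rightMulOp_vD_apply D c τ, hc, Finsupp.coe_zero, Pi.zero_apply]

lemma span_rightMulOp_vD :
    Submodule.span ℂ
      (Set.range (fun σ : {σ : PermN n // Des n σ⁻¹ ⊆ D} => rightMulOp n σ.1 (vD n D)))
      = PD n D := by
  have hle : Submodule.span ℂ (Set.range
      (fun σ : {σ : PermN n // Des n σ⁻¹ ⊆ D} => rightMulOp n σ.1 (vD n D))) ≤ PD n D :=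
    Submodule.span_le.2 (Set.range_subset_iff.2 fun σ => rightMulOp_mem_PD (vD_mem_PD D) σ.1)
  refine le_antisymm hle fun f hf => ?_
  set g := ∑ σ : {σ : PermN n // Des n σ⁻¹ ⊆ D}, f σ.1 • rightMulOp n σ.1 (vD n D)
  have hg : g ∈ Submodule.span ℂ (Set.range
      (fun σ : {σ : PermN n // Des n σ⁻¹ ⊆ D} => rightMulOp n σ.1 (vD n D))) :=
    Submodule.sum_mem _ fun σ _ => Submodule.smul_mem _ _ (Submodule.subset_span ⟨σ, rfl⟩)
  have hfg : f - g = 0 := eq_zero_of_mem_PD_of_apply_eq_zero D (sub_mem hf (hle hg)) fun τ hτ => by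
    rw [Finsupp.sub_apply, sum_smul_rightMulOp_vD_apply D _ ⟨τ, hτ⟩, sub_self]
  rwa [sub_eq_zero.1 hfg]

lemma finrank_PD :
    Module.finrank ℂ (PD n D) = Fintype.card {σ : PermN n // Des n σ⁻¹ ⊆ D} := by
  rw [← span_rightMulOp_vD, finrank_span_eq_card (linearIndependent_rightMulOp_vD D)]

lemma vPerm_apply_self (σ : PermN n) : vPerm n σ σ = 1 := by
  rw [vPerm, rightMulOp_apply, mul_inv_cancel, vD_apply, if_pos (one_mem _)]
  simp

lemma invCount_lt_of_vPerm_apply_ne_zero {σ τ : PermN n} (hne : σ ≠ τ) (h : vPerm n σ τ ≠ 0) :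
    invCount σ < invCount τ := by
  rw [vPerm, rightMulOp_apply, vD_apply, ite_ne_right_iff] at h
  simpa using invCount_lt_invCount_mul subset_rfl (blockIndex_comp_of_mem_Young h.1)
    (mul_inv_eq_one.not.2 (Ne.symm hne))

lemma linearIndependent_vPerm :
    LinearIndependent ℂ (fun σ : {σ : PermN n // Des n σ⁻¹ ⊆ D} => vPerm n σ.1) :=
  Finsupp.linearIndependent_of_unitriangular _ (fun σ => σ.1) (fun σ => invCount σ.1)
    (fun σ => vPerm_apply_self σ.1)
    (fun _ _ hne h => invCount_lt_of_vPerm_apply_ne_zero (Subtype.coe_ne_coe.2 hne) h)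

lemma span_vPerm :
    Submodule.span ℂ
      (Set.range (fun σ : {σ : PermN n // Des n σ⁻¹ ⊆ D} => vPerm n σ.1)) = PD n D := by
  have : FiniteDimensional ℂ (PD n D) :=
    span_rightMulOp_vD D ▸ FiniteDimensional.span_of_finite ℂ (Set.finite_range _)
  refine Submodule.eq_of_le_of_finrank_le (Submodule.span_le.2 (Set.range_subset_iff.2 fun σ =>
    PD_mono σ.2 (rightMulOp_mem_PD (vD_mem_PD _) σ.1))) ?_
  rw [finrank_span_eq_card (linearIndependent_vPerm D), finrank_PD]

end Bases

section Counting

lemma card_perm_eq_card_Young_mul (D : Set ℕ) :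
    Fintype.card (PermN n) =
      Fintype.card (Young n D) * Fintype.card {σ : PermN n // Des n σ⁻¹ ⊆ D} := by
  rw [← Fintype.card_prod, Fintype.card_congr (youngMulEquiv D)]

lemma Composition.sizeUpTo_lt_sizeUpTo (C : Composition n) {a b : ℕ} (hab : a < b)
    (hb : b ≤ C.length) : C.sizeUpTo a < C.sizeUpTo b :=
  (C.sizeUpTo_strict_mono (by omega)).trans_le (C.monotone_sizeUpTo hab)

lemma blockIndex_eq_index (C : Composition n) {D : Set ℕ}
    (hD : {j | ∃ k, 0 < k ∧ k < C.length ∧ j + 1 = C.sizeUpTo k} = D) (x : Fin n) :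
    blockIndex D x = C.index x := by
  have hlo := C.sizeUpTo_index_le x
  have hhi : (x : ℕ) < C.sizeUpTo (C.index x + 1) := C.lt_sizeUpTo_index_succ x
  set m : ℕ := (C.index x : ℕ)
  have hm : m < C.length := (C.index x).isLt
  have hpos : ∀ k, 0 < k → k ≤ C.length → 0 < C.sizeUpTo k := fun k hk hkl => by
    simpa using C.sizeUpTo_lt_sizeUpTo hk hkl
  have hset : {j ∈ range x | j ∈ D} = (Ico 1 (m + 1)).image (fun k => C.sizeUpTo k - 1) := by
    ext j
    simp only [mem_filter, mem_range, mem_image, mem_Ico, ← hD, Set.mem_ofPred_eq]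
    constructor
    · rintro ⟨hjx, k, hk, hkl, hjk⟩
      refine ⟨k, ⟨hk, Nat.lt_succ_of_le (not_lt.1 fun hmk => ?_)⟩, by omega⟩
      have := C.monotone_sizeUpTo (show m + 1 ≤ k from hmk)
      omega
    · rintro ⟨k, ⟨hk, hkm⟩, rfl⟩
      have := hpos k hk (by omega)
      have := C.monotone_sizeUpTo (show k ≤ m by omega)
      exact ⟨by omega, k, hk, by omega, by omega⟩
  rw [blockIndex, hset, card_image_of_injOn, Nat.card_Ico, Nat.add_sub_cancel]
  refine StrictMonoOn.injOn fun a ha b hb hab => ?_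
  simp only [coe_Ico, Set.mem_Ico] at ha hb
  have := hpos a ha.1 (by omega)
  have := C.sizeUpTo_lt_sizeUpTo hab (by omega)
  omega

lemma Composition.card_index_eq (C : Composition n) (i : Fin C.length) :
    Fintype.card {a // C.index a = i} = C.blocksFun i := by
  rw [← Fintype.card_fin (C.blocksFun i)]
  exact Fintype.card_congr ((Equiv.ofInjective _ (C.embedding i).injective).trans
    (Equiv.subtypeEquivRight fun a => C.mem_range_embedding_iff'.trans eq_comm)).symm

lemma card_Young_eq_prod (C : Composition n) {D : Set ℕ}
    (hD : {j | ∃ k, 0 < k ∧ k < C.length ∧ j + 1 = C.sizeUpTo k} = D) :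
    Fintype.card (Young n D) = (C.blocks.map Nat.factorial).prod := by
  have hYoung : ∀ ν : PermN n, ν ∈ Young n D ↔ C.index ∘ ν = C.index := fun ν => by
    rw [mem_Young_iff, show blockIndex D = Fin.val ∘ C.index from funext (blockIndex_eq_index C hD),
      Function.comp_assoc, Fin.val_injective.comp_left.eq_iff]
  rw [Fintype.card_congr (Equiv.subtypeEquivRight hYoung), DomMulAct.stabilizer_card,
    ← Fin.prod_univ_fun_getElem]
  exact Finset.prod_congr rfl fun i _ => by rw [C.card_index_eq]; rfl

end Counting

theorem PD_bases_general (n : ℕ) (D : Set ℕ) :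
    LinearIndependent ℂ
      (fun σ : {σ : PermN n // Des n σ⁻¹ ⊆ D} => rightMulOp n σ.1 (vD n D)) ∧
    Submodule.span ℂ
      (Set.range (fun σ : {σ : PermN n // Des n σ⁻¹ ⊆ D} => rightMulOp n σ.1 (vD n D)))
      = PD n D ∧
    LinearIndependent ℂ
      (fun σ : {σ : PermN n // Des n σ⁻¹ ⊆ D} => vPerm n σ.1) ∧
    Submodule.span ℂ
      (Set.range (fun σ : {σ : PermN n // Des n σ⁻¹ ⊆ D} => vPerm n σ.1)) = PD n D ∧
    (∀ c : List ℕ, c.sum = n → (∀ x ∈ c, 0 < x) →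
      {j : ℕ | ∃ k, 0 < k ∧ k < c.length ∧ j + 1 = (c.take k).sum} = D →
      Module.finrank ℂ ↥(PD n D) = Nat.factorial n / (c.map Nat.factorial).prod) := by
  refine ⟨linearIndependent_rightMulOp_vD D, span_rightMulOp_vD D, linearIndependent_vPerm D,
    span_vPerm D, fun c hsum hpos hD => ?_⟩
  have hYoung := card_Young_eq_prod ⟨c, hpos _, hsum⟩ hD
  have hfact : n.factorial =
      Fintype.card (Young n D) * Fintype.card {σ : PermN n // Des n σ⁻¹ ⊆ D} := by
    rw [← card_perm_eq_card_Young_mul, Fintype.card_perm, Fintype.card_fin]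
  rw [finrank_PD, ← hYoung, hfact, Nat.mul_div_cancel_left _ Fintype.card_pos]

/-- The families `{v_D · σ_σ}` and `{v_σ}`, indexed by the
permutations `σ` with `Des(σ⁻¹) ⊆ D`, are bases of `P_D`; in particular
`dim P_D = n!/(i₁!⋯i_k!)` for the composition `(i₁,…,i_k)` of `n` with descent
set `D`. -/
theorem PD_bases (n : ℕ) (hn : 1 ≤ n) (D : Set ℕ) (hD : ∀ i ∈ D, i + 1 < n) :
    LinearIndependent ℂ
      (fun σ : {σ : PermN n // Des n σ⁻¹ ⊆ D} => rightMulOp n σ.1 (vD n D)) ∧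
    Submodule.span ℂ
      (Set.range (fun σ : {σ : PermN n // Des n σ⁻¹ ⊆ D} => rightMulOp n σ.1 (vD n D)))
      = PD n D ∧
    LinearIndependent ℂ
      (fun σ : {σ : PermN n // Des n σ⁻¹ ⊆ D} => vPerm n σ.1) ∧
    Submodule.span ℂ
      (Set.range (fun σ : {σ : PermN n // Des n σ⁻¹ ⊆ D} => vPerm n σ.1)) = PD n D ∧
    (∀ c : List ℕ, c.sum = n → (∀ x ∈ c, 0 < x) →
      {j : ℕ | ∃ k, 0 < k ∧ k < c.length ∧ j + 1 = (c.take k).sum} = D →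
      Module.finrank ℂ ↥(PD n D) = Nat.factorial n / (c.map Nat.factorial).prod) :=
  PD_bases_general n D

end
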